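/- Let 𝕜, V = V_1 ⊕ ... ⊕ V_n, W_j, e and e_0 be as in the context, and assume further that e is nilpotent with dim ker(e^p) = Σ_{j=1}^m min(p, μ^Σ_j) for all p ≥ 0 (i.e. e has Jordan type μ^Σ), and that for each k the restriction e_0|_{V_k} is nilpotent of Jordan type μ_k. Suppose that for each k, F^{(k)}_• is a full flag of V_k with e_0(F^{(k)}_d) ⊆ F^{(k)}_{d-1} for all d ≥ 1 and Φ(F^{(k)}_•) = σ^{(k)} with respect to e_0|_{V_k}, where σ^{(k)} ∈ Std(μ_k). If τ ∈ Std(μ^Σ) satisfies Φ(LS(F^{(1)}_•,...,F^{(n)}_•)) = τ with respect to e, then either τ = stk(σ^{(1)},...,σ^{(n)}) or stk(σ^{(1)},...,σ^{(n)}) < τ in the order on Std(μ^Σ). -/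

import Mathlib

/-- A list of naturals is a partition: non-increasing with positive parts. -/
def IsPartitionL (μ : List ℕ) : Prop :=
  μ.Pairwise (· ≥ ·) ∧ ∀ x ∈ μ, 0 < x

/-- A standard tableau of shape `μ` (a partition of `μ.sum`), given as a function on
0-indexed boxes `(r, c)` with `r < μ.length` and `c < μ.getD r 0`: the entries are exactly
`{1, ..., μ.sum}` each occurring once, strictly increasing along rows and down columns. -/
structure IsStdTableau (μ : List ℕ) (T : ℕ → ℕ → ℕ) : Prop where
  entry_mem : ∀ r c, r < μ.length → c < μ.getD r 0 → 1 ≤ T r c ∧ T r c ≤ μ.sum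
  exists_box : ∀ a, 1 ≤ a → a ≤ μ.sum → ∃ r c, r < μ.length ∧ c < μ.getD r 0 ∧ T r c = a
  inj : ∀ r c r' c', r < μ.length → c < μ.getD r 0 → r' < μ.length → c' < μ.getD r' 0 →
      T r c = T r' c' → r = r' ∧ c = c'
  row_lt : ∀ r c c', r < μ.length → c < c' → c' < μ.getD r 0 → T r c < T r c'
  col_lt : ∀ r r' c, r < r' → r' < μ.length → c < μ.getD r' 0 → T r c < T r' c

/-- `shift μ k = λ_0 + ... + λ_{k-1}` where `λ_l = (μ l).sum`. -/
def shift (μ : ℕ → List ℕ) (k : ℕ) : ℕ := ∑ l ∈ Finset.range k, (μ l).sum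

/-- The maximal number of parts among `μ 0, ..., μ (n-1)`. -/
def maxLen (n : ℕ) (μ : ℕ → List ℕ) : ℕ := (Finset.range n).sup fun k => (μ k).length

/-- The pointwise sum partition `μ^Σ`, with `j`-th part `Σ_{i<n} μ_{i,j}`. -/
def sumShape (n : ℕ) (μ : ℕ → List ℕ) : List ℕ :=
  List.ofFn fun r : Fin (maxLen n μ) => ∑ k ∈ Finset.range n, (μ k).getD (r : ℕ) 0

/-- Row `r` of the stacked filling: the concatenation over `k = 0, ..., n-1` of row `r`
of `T k`, with every entry of the `k`-th row increased by `λ_0 + ... + λ_{k-1}`. -/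
def stkRow (n : ℕ) (μ : ℕ → List ℕ) (T : ℕ → ℕ → ℕ → ℕ) (r : ℕ) : List ℕ :=
  ((List.range n).map fun k =>
    (List.range ((μ k).getD r 0)).map fun c => T k r c + shift μ k).flatten

/-- The entry of the stacked filling `stk (T 0, ..., T (n-1))` in box `(r, c)`. -/
def stkEntry (n : ℕ) (μ : ℕ → List ℕ) (T : ℕ → ℕ → ℕ → ℕ) (r c : ℕ) : ℕ :=
  (stkRow n μ T r).getD c 0

/-- The (0-indexed) column of the tableau `T` of shape `μ` containing the entry `a`. -/
noncomputable def colOf (μ : List ℕ) (T : ℕ → ℕ → ℕ) (a : ℕ) : ℕ :=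
  sInf {c : ℕ | ∃ r, r < μ.length ∧ c < μ.getD r 0 ∧ T r c = a}

/-- Spaltenstein's total order on standard tableaux of shape `μ`: `σ < τ` iff for some
entry `i`, the column of `i` in `σ` is smaller than in `τ`, and every entry `j > i`
occupies the same column in `σ` and `τ`. -/
def TabLT (μ : List ℕ) (σ τ : ℕ → ℕ → ℕ) : Prop :=
  ∃ i, 1 ≤ i ∧ i ≤ μ.sum ∧ colOf μ σ i < colOf μ τ i ∧
    ∀ j, i < j → j ≤ μ.sum → colOf μ σ j = colOf μ τ j

/-- The number of entries `a ∈ {1,...,i}` of the tableau `T` of shape `μ` lying in the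
first `p` columns (0-indexed columns `c < p`). -/
noncomputable def entriesInCols (μ : List ℕ) (T : ℕ → ℕ → ℕ) (i p : ℕ) : ℕ :=
  Set.ncard {a : ℕ | 1 ≤ a ∧ a ≤ i ∧
    ∃ r c, r < μ.length ∧ c < μ.getD r 0 ∧ c < p ∧ T r c = a}

section LinearDefs

variable {𝕜 V : Type*} [Field 𝕜] [AddCommGroup V] [Module 𝕜 V]

/-- A full flag `0 = F 0 ⊂ F 1 ⊂ ... ⊂ F N = V` of an `N`-dimensional space. -/
structure IsFullFlag (N : ℕ) (F : ℕ → Submodule 𝕜 V) : Prop where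
  mono : Monotone F
  bot : F 0 = ⊥
  top : F N = ⊤
  dim : ∀ i ≤ N, Module.finrank 𝕜 ↥(F i) = i

/-- A full flag `0 = F 0 ⊂ F 1 ⊂ ... ⊂ F l = U` of an `l`-dimensional subspace `U ⊆ V`. -/
structure IsFlagOf (U : Submodule 𝕜 V) (l : ℕ) (F : ℕ → Submodule 𝕜 V) : Prop where
  mono : Monotone F
  le : ∀ d, F d ≤ U
  bot : F 0 = ⊥
  top : F l = U
  dim : ∀ d ≤ l, Module.finrank 𝕜 ↥(F d) = d

/-- `V = V_0 ⊕ ... ⊕ V_{n-1}` is an internal direct sum decomposition with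
`dim V_k = lam k`. -/
structure IsDecomp (n : ℕ) (lam : ℕ → ℕ) (Vsub : ℕ → Submodule 𝕜 V) : Prop where
  dim : ∀ k < n, Module.finrank 𝕜 ↥(Vsub k) = lam k
  indep : ∀ k < n, Disjoint (Vsub k) (∑ l ∈ (Finset.range n).erase k, Vsub l)
  total : ∑ k ∈ Finset.range n, Vsub k = ⊤

/-- Partial sums `lam 0 + ... + lam (k-1)`. -/
def pSum (lam : ℕ → ℕ) (k : ℕ) : ℕ := ∑ l ∈ Finset.range k, lam l

/-- For `1 ≤ i`, the (0-indexed) index `j` of the block containing position `i`, i.e. the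
largest `j ≤ n` with `lam 0 + ... + lam (j-1) < i`. -/
def LSidx (n : ℕ) (lam : ℕ → ℕ) (i : ℕ) : ℕ :=
  Nat.findGreatest (fun j => pSum lam j < i) n

/-- The Lusztig–Spaltenstein flag: `F̄ i = W_{j-1} + F j d` where `j = LSidx n lam i` is the
block containing position `i`, `W_{j-1} = V_0 + ... + V_{j-1}` and `d = i - (lam 0 + ... + lam (j-1))`. -/
def LSflag (n : ℕ) (lam : ℕ → ℕ) (Vsub : ℕ → Submodule 𝕜 V)
    (F : ℕ → ℕ → Submodule 𝕜 V) (i : ℕ) : Submodule 𝕜 V :=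
  (∑ k ∈ Finset.range (LSidx n lam i), Vsub k) +
    F (LSidx n lam i) (i - pSum lam (LSidx n lam i))

end LinearDefs

/-!
Write `c_T(i, p)` for the number of entries `≤ i` in the first `p` columns of a tableau `T`.
For standard tableaux `S`, `T` of one shape, `c_S ≤ c_T` everywhere forces `T = S` or `S < T`:
at the largest entry `i` whose column differs, the counts at `i` agree, and `i` sitting in a
later column of `S` would make `c_S(i - 1, p) > c_T(i - 1, p)` for `p` just past its column in `T`.
Since `c_τ(i, p) = dim (F̄_i ∩ ker eᵖ)`, it remains to bound the stacked counts by these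
dimensions. For `i = λ_0 + ... + λ_{j-1} + d` we have `F̄_i = W_j ⊕ F^{(j)}_d`, and for any
split `p = a + b` the triangularity of `e` gives `eᵖ (W_j + X) ⊆ eᵃ W_j + e₀ᵇ X` for `X ⊆ V_j`.
By induction on `j` (splitting `p` optimally at each step) the rank of `eᵃ` on `W_j` is at most
that of a nilpotent of type `μ_0 + ... + μ_{j-1}`; rank–nullity then turns the estimate into
a lower bound for `dim (F̄_i ∩ ker eᵖ)`, which dominates the stacked count once `b` is chosen as
one more than the last column of block `j` holding a counted entry.
-/

open Finset

theorem exists_add_eq_sum_tsub_add_sum_tsub_le {ι : Type*} [LinearOrder ι] {A B : ι → ℕ}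
    (hA : Antitone A) (hB : Antitone B) (s : Finset ι) (p : ℕ) :
    ∃ a b, a + b = p ∧
      ∑ r ∈ s, (A r - a) + ∑ r ∈ s, (B r - b) ≤ ∑ r ∈ s, (A r + B r - p) := by
  -- The points `(A r, B r)` form a chain; put `(a, p - a)` above those with `A r + B r ≤ p`
  -- and below the others, then every row satisfies the inequality termwise.
  let lo : ι → ℕ := fun r => if A r + B r ≤ p then A r else p - B r
  let hi : ι → ℕ := fun r => if A r + B r ≤ p then p - B r else A r
  have lo_le_hi : ∀ r t, lo r ≤ hi t := by
    intro r t
    rcases le_total r t with h | h <;>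
    · have := hA h; have := hB h
      simp only [lo, hi]; split_ifs <;> omega
  set a := s.sup lo
  have ha : a ≤ p := Finset.sup_le fun r _ => by simp only [lo]; split_ifs <;> omega
  refine ⟨a, p - a, by omega, ?_⟩
  rw [← sum_add_distrib]
  refine sum_le_sum fun r hr => ?_
  have h₁ : lo r ≤ a := le_sup (f := lo) hr
  have h₂ : a ≤ hi r := Finset.sup_le fun t _ => lo_le_hi t r
  simp only [lo, hi] at h₁ h₂
  split_ifs at h₁ h₂ <;> omega

theorem IsPartitionL.antitone_getD {l : List ℕ} (hl : IsPartitionL l) :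
    Antitone (l.getD · 0) := by
  intro r r' h
  show l.getD r' 0 ≤ l.getD r 0
  rcases lt_or_ge r' l.length with h' | h'
  · rw [List.getD_eq_getElem _ _ h', List.getD_eq_getElem _ _ (h.trans_lt h')]
    rcases h.eq_or_lt with rfl | hlt
    · exact le_rfl
    · exact List.pairwise_iff_getElem.mp hl.1 r r' _ _ hlt
  · rw [List.getD_eq_default _ _ h']
    exact Nat.zero_le _

theorem lt_length_of_lt_getD {l : List ℕ} {r c : ℕ} (h : c < l.getD r 0) : r < l.length := by
  by_contra h'
  rw [List.getD_eq_default _ _ (not_lt.mp h')] at h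
  exact Nat.not_lt_zero _ h

theorem sum_range_length_eq_sum_range {M : Type*} [AddCommMonoid M] (l : List ℕ) {L : ℕ}
    (hL : l.length ≤ L) {g : ℕ → ℕ → M} (hg : ∀ r, g r 0 = 0) :
    ∑ r ∈ range l.length, g r (l.getD r 0) = ∑ r ∈ range L, g r (l.getD r 0) := by
  refine sum_subset (range_subset_range.mpr hL) fun r _ hr => ?_
  rw [List.getD_eq_default _ _ (not_lt.mp (mem_range.not.mp hr)), hg]

theorem sum_range_getD_eq_sum {l : List ℕ} {L : ℕ} (hL : l.length ≤ L) :
    ∑ r ∈ range L, l.getD r 0 = l.sum := by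
  rw [← sum_range_length_eq_sum_range l hL (g := fun _ x => x) fun _ => rfl,
    ← Fin.sum_univ_getElem, ← Fin.sum_univ_eq_sum_range]
  exact sum_congr rfl fun r _ => List.getD_eq_getElem _ _ r.2

theorem entriesInCols_zero (ν : List ℕ) (T : ℕ → ℕ → ℕ) (p : ℕ) : entriesInCols ν T 0 p = 0 := by
  have : {a | 1 ≤ a ∧ a ≤ 0 ∧ ∃ r c, r < ν.length ∧ c < ν.getD r 0 ∧ c < p ∧ T r c = a} = ∅ :=
    Set.eq_empty_of_forall_notMem fun a ha => by have := ha.1.trans ha.2.1; omega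
  rw [entriesInCols, this, Set.ncard_empty]

namespace IsStdTableau

variable {ν : List ℕ} {S T : ℕ → ℕ → ℕ}

theorem colOf_apply (hT : IsStdTableau ν T) {r c : ℕ} (hr : r < ν.length)
    (hc : c < ν.getD r 0) : colOf ν T (T r c) = c := by
  have : {c' | ∃ r', r' < ν.length ∧ c' < ν.getD r' 0 ∧ T r' c' = T r c} = {c} := by
    ext c'
    constructor
    · rintro ⟨r', hr', hc', h⟩
      exact (hT.inj r' c' r c hr' hc' hr hc h).2
    · rintro rfl
      exact ⟨r, hr, hc, rfl⟩
  rw [colOf, this, csInf_singleton]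

theorem row_le (hT : IsStdTableau ν T) {r c c' : ℕ} (hr : r < ν.length) (hcc' : c ≤ c')
    (hc' : c' < ν.getD r 0) : T r c ≤ T r c' := by
  rcases hcc'.eq_or_lt with rfl | h
  exacts [le_rfl, (hT.row_lt r c c' hr h hc').le]

theorem entriesInCols_eq_sum (hT : IsStdTableau ν T) (i p : ℕ) :
    entriesInCols ν T i p =
      ∑ r ∈ range ν.length, #{c ∈ range (ν.getD r 0) | T r c ≤ i ∧ c < p} := by
  let boxes := (range ν.length).sigma fun r => {c ∈ range (ν.getD r 0) | T r c ≤ i ∧ c < p}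
  have hset : {a | 1 ≤ a ∧ a ≤ i ∧ ∃ r c, r < ν.length ∧ c < ν.getD r 0 ∧ c < p ∧ T r c = a} =
      ↑(boxes.image fun x => T x.1 x.2) := by
    ext a
    simp only [Set.mem_ofPred_eq, coe_image, Set.mem_image, mem_coe, boxes, mem_sigma,
      mem_filter, mem_range, Sigma.exists]
    constructor
    · rintro ⟨-, hai, r, c, hr, hc, hcp, rfl⟩
      exact ⟨r, c, ⟨hr, hc, hai, hcp⟩, rfl⟩
    · rintro ⟨r, c, ⟨hr, hc, hci, hcp⟩, rfl⟩
      exact ⟨(hT.entry_mem r c hr hc).1, hci, r, c, hr, hc, hcp, rfl⟩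
  rw [entriesInCols, hset, Set.ncard_coe_finset, card_image_of_injOn, card_sigma]
  rintro ⟨r, c⟩ hx ⟨r', c'⟩ hy h
  simp only [coe_sigma, Set.mem_sigma_iff, mem_coe, mem_filter, mem_range, boxes] at hx hy
  obtain ⟨rfl, rfl⟩ := hT.inj r c r' c' hx.1 hx.2.1 hy.1 hy.2.1 h
  rfl

theorem entriesInCols_sum (hT : IsStdTableau ν T) (p : ℕ) :
    entriesInCols ν T ν.sum p = ∑ r ∈ range ν.length, min p (ν.getD r 0) := by
  rw [hT.entriesInCols_eq_sum]
  refine sum_congr rfl fun r hr => ?_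
  rw [← card_range (min p _)]
  congr 1
  ext c
  simp only [mem_filter, mem_range, lt_min_iff]
  constructor
  · rintro ⟨hc, -, hcp⟩
    exact ⟨hcp, hc⟩
  · rintro ⟨hcp, hc⟩
    exact ⟨hc, (hT.entry_mem r c (mem_range.mp hr) hc).2, hcp⟩

theorem entriesInCols_eq_card_filter (hT : IsStdTableau ν T) {i : ℕ} (hi : i ≤ ν.sum)
    (p : ℕ) : entriesInCols ν T i p = #{a ∈ Ioc 0 i | colOf ν T a < p} := by
  rw [entriesInCols, ← Set.ncard_coe_finset]
  congr 1
  ext a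
  simp only [Set.mem_ofPred_eq, coe_filter, mem_Ioc]
  constructor
  · rintro ⟨ha, hai, r, c, hr, hc, hcp, rfl⟩
    exact ⟨⟨ha, hai⟩, by rwa [hT.colOf_apply hr hc]⟩
  · rintro ⟨⟨ha, hai⟩, hap⟩
    obtain ⟨r, c, hr, hc, rfl⟩ := hT.exists_box a ha (hai.trans hi)
    exact ⟨ha, hai, r, c, hr, hc, by rwa [hT.colOf_apply hr hc] at hap, rfl⟩

theorem entriesInCols_eq_add (hT : IsStdTableau ν T) {k l : ℕ} (hkl : k ≤ l)
    (hl : l ≤ ν.sum) (p : ℕ) :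
    entriesInCols ν T l p = entriesInCols ν T k p + #{a ∈ Ioc k l | colOf ν T a < p} := by
  rw [hT.entriesInCols_eq_card_filter hl, hT.entriesInCols_eq_card_filter (hkl.trans hl),
    ← Ioc_union_Ioc_eq_Ioc (Nat.zero_le k) hkl, filter_union, card_union_of_disjoint]
  exact disjoint_filter_filter (Ioc_disjoint_Ioc_of_le le_rfl)

theorem entriesInCols_eq_of_colOf_eq (hS : IsStdTableau ν S) (hT : IsStdTableau ν T)
    {i : ℕ} (hi : i ≤ ν.sum)
    (h : ∀ a, i < a → a ≤ ν.sum → colOf ν S a = colOf ν T a) (p : ℕ) :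
    entriesInCols ν S i p = entriesInCols ν T i p := by
  have hS' := hS.entriesInCols_eq_add hi le_rfl p
  have hT' := hT.entriesInCols_eq_add hi le_rfl p
  rw [hS.entriesInCols_sum, ← hT.entriesInCols_sum,
    filter_congr fun a ha => by rw [h a (mem_Ioc.mp ha).1 (mem_Ioc.mp ha).2]] at hS'
  omega

theorem card_filter_colOf_eq (hT : IsStdTableau ν T) (hν : Antitone (ν.getD · 0))
    {r c : ℕ} (hr : r < ν.length) (hc : c < ν.getD r 0) :
    #{a ∈ Ioc 0 ν.sum | a < T r c ∧ colOf ν T a = c} = r := by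
  have himage : {a ∈ Ioc 0 ν.sum | a < T r c ∧ colOf ν T a = c} =
      (range r).image fun r' => T r' c := by
    ext a
    simp only [mem_filter, mem_Ioc, mem_image, mem_range]
    constructor
    · rintro ⟨⟨ha, haN⟩, hlt, hcol⟩
      obtain ⟨r', c', hr', hc', rfl⟩ := hT.exists_box a ha haN
      rw [hT.colOf_apply hr' hc'] at hcol
      subst hcol
      refine ⟨r', ?_, rfl⟩
      by_contra! hrr'
      rcases hrr'.eq_or_lt with rfl | hlt'
      · exact lt_irrefl _ hlt
      · exact (hT.col_lt r r' c' hlt' hr' hc').not_gt hlt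
    · rintro ⟨r', hr', rfl⟩
      have hc' : c < ν.getD r' 0 := hc.trans_le (hν hr'.le)
      have := hT.entry_mem r' c (hr'.trans hr) hc'
      exact ⟨this, hT.col_lt r' r c hr' hr hc, hT.colOf_apply (hr'.trans hr) hc'⟩
  rw [himage, card_image_of_injOn, card_range]
  intro r₁ h₁ r₂ h₂ h
  rw [coe_range, Set.mem_Iio] at h₁ h₂
  exact (hT.inj r₁ c r₂ c (h₁.trans hr) (hc.trans_le (hν h₁.le)) (h₂.trans hr)
    (hc.trans_le (hν h₂.le)) h).1

theorem eq_of_colOf_eq (hS : IsStdTableau ν S) (hT : IsStdTableau ν T)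
    (hν : Antitone (ν.getD · 0)) (h : ∀ a, 1 ≤ a → a ≤ ν.sum → colOf ν S a = colOf ν T a)
    {r c : ℕ} (hr : r < ν.length) (hc : c < ν.getD r 0) : T r c = S r c := by
  obtain ⟨ha, haN⟩ := hT.entry_mem r c hr hc
  obtain ⟨r', c', hr', hc', hS'⟩ := hS.exists_box (T r c) ha haN
  have hcc' : c' = c := by
    rw [← hS.colOf_apply hr' hc', hS', h _ ha haN, hT.colOf_apply hr hc]
  subst hcc'
  have hrr' : r' = r := by
    rw [← hS.card_filter_colOf_eq hν hr' hc', ← hT.card_filter_colOf_eq hν hr hc, hS']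
    exact congrArg card (filter_congr fun a ha => by
      rw [h a (mem_Ioc.mp ha).1 (mem_Ioc.mp ha).2])
  rw [← hS', hrr']

theorem eq_or_tabLT_of_entriesInCols_le (hS : IsStdTableau ν S) (hT : IsStdTableau ν T)
    (hν : Antitone (ν.getD · 0))
    (hle : ∀ i ≤ ν.sum, ∀ p, entriesInCols ν S i p ≤ entriesInCols ν T i p) :
    (∀ r c, r < ν.length → c < ν.getD r 0 → T r c = S r c) ∨ TabLT ν S T := by
  let D := {a ∈ Ioc 0 ν.sum | colOf ν S a ≠ colOf ν T a}
  rcases D.eq_empty_or_nonempty with hD | hD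
  · refine .inl fun r c hr hc => hS.eq_of_colOf_eq hT hν (fun a ha haN => ?_) hr hc
    by_contra hne
    exact (eq_empty_iff_forall_notMem.mp hD) a (mem_filter.mpr ⟨mem_Ioc.mpr ⟨ha, haN⟩, hne⟩)
  refine .inr ?_
  obtain ⟨i, hiD, himax⟩ : ∃ i ∈ D, ∀ a ∈ D, a ≤ i :=
    ⟨D.max' hD, D.max'_mem hD, fun a ha => D.le_max' a ha⟩
  rw [mem_filter, mem_Ioc] at hiD
  obtain ⟨⟨hi, hiN⟩, hne⟩ := hiD
  have habove : ∀ a, i < a → a ≤ ν.sum → colOf ν S a = colOf ν T a := by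
    intro a hia haN
    by_contra hne
    exact (himax a (mem_filter.mpr ⟨mem_Ioc.mpr ⟨hi.trans hia, haN⟩, hne⟩)).not_gt hia
  refine ⟨i, hi, hiN, lt_of_le_of_ne (not_lt.mp fun hlt => ?_) hne, habove⟩
  -- in the first `colOf T i + 1` columns, `i` is counted for `T` but not for `S`
  set p := colOf ν T i + 1
  have hstep : ∀ {U}, IsStdTableau ν U → entriesInCols ν U i p =
      entriesInCols ν U (i - 1) p + if colOf ν U i < p then 1 else 0 := fun hU => by
    have : Ioc (i - 1) i = {i} := by ext; simp only [mem_Ioc, mem_singleton]; omega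
    rw [hU.entriesInCols_eq_add (Nat.sub_le i 1) hiN, this, filter_singleton]
    split_ifs <;> rfl
  have hS₁ := hstep hS
  have hT₁ := hstep hT
  have := hS.entriesInCols_eq_of_colOf_eq hT hiN habove p
  have := hle (i - 1) (by omega) p
  rw [if_neg (by omega)] at hS₁
  rw [if_pos (by omega)] at hT₁
  omega

theorem min_add_card_filter_le (hT : IsStdTableau ν T) (hν : Antitone (ν.getD · 0))
    {s : ℕ → ℕ} (hs : Antitone s) {d p r r₀ c₀ : ℕ} (hc₀ : c₀ < ν.getD r₀ 0)
    (hp₀ : s r₀ + c₀ < p) (hd₀ : T r₀ c₀ ≤ d)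
    (hmax : ∀ c ∈ {c ∈ range (ν.getD r 0) | s r + c < p ∧ T r c ≤ d}, c ≤ c₀) :
    min p (s r) + #{c ∈ range (ν.getD r 0) | s r + c < p ∧ T r c ≤ d} ≤
      min (p - (c₀ + 1)) (s r) + #{c ∈ range (ν.getD r 0) | T r c ≤ d ∧ c < c₀ + 1} := by
  by_cases hsr : s r ≤ p - (c₀ + 1)
  · have : {c ∈ range (ν.getD r 0) | s r + c < p ∧ T r c ≤ d} ⊆
        {c ∈ range (ν.getD r 0) | T r c ≤ d ∧ c < c₀ + 1} := fun c hc => by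
      have := hmax c hc
      simp only [mem_filter] at hc ⊢
      exact ⟨hc.1, hc.2.2, by omega⟩
    have := card_le_card this
    omega
  -- a row reaching past `p - (c₀ + 1)` lies above `r₀`, so its first `c₀ + 1` entries are `≤ d`
  have hrr₀ : r < r₀ := by
    by_contra! h
    have := hs h
    omega
  have hr₀ := lt_length_of_lt_getD hc₀
  have hC : {c ∈ range (ν.getD r 0) | T r c ≤ d ∧ c < c₀ + 1} = range (c₀ + 1) := by
    ext c
    simp only [mem_filter, mem_range]
    refine ⟨fun h => h.2.2, fun hc => ?_⟩
    have hc₀r : c₀ < ν.getD r 0 := hc₀.trans_le (hν hrr₀.le)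
    have hrow := hT.row_le (hrr₀.trans hr₀) (Nat.lt_succ_iff.mp hc) hc₀r
    exact ⟨by omega, (hrow.trans_lt (hT.col_lt r r₀ c₀ hrr₀ hr₀ hc₀)).le.trans hd₀, hc⟩
  have hR : #{c ∈ range (ν.getD r 0) | s r + c < p ∧ T r c ≤ d} ≤ p - s r := by
    rw [← card_range (p - s r)]
    exact card_le_card fun c hc => by
      simp only [mem_filter, mem_range] at hc ⊢
      omega
  rw [hC, card_range]
  omega

theorem exists_split_card_filter_le (hT : IsStdTableau ν T) (hν : Antitone (ν.getD · 0))
    {s : ℕ → ℕ} (hs : Antitone s) {L : ℕ} (hL : ν.length ≤ L) (d p : ℕ) :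
    ∃ a b, a + b = p ∧
      ∑ r ∈ range L, (min p (s r) + #{c ∈ range (ν.getD r 0) | s r + c < p ∧ T r c ≤ d}) ≤
        ∑ r ∈ range L, min a (s r) + entriesInCols ν T d b := by
  let R r := {c ∈ range (ν.getD r 0) | s r + c < p ∧ T r c ≤ d}
  rcases ((range L).sigma R).eq_empty_or_nonempty with hR | hR
  · refine ⟨p, 0, add_zero p, le_add_right (sum_le_sum fun r hr => ?_)⟩
    have hRr : {c ∈ range (ν.getD r 0) | s r + c < p ∧ T r c ≤ d} = ∅ :=
      sigma_eq_empty.mp hR r hr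
    rw [hRr, card_empty, add_zero]
  -- `b` is one more than the largest column occupied by a box counted in some `R r`
  obtain ⟨⟨r₀, c₀⟩, h₀, hmax⟩ := exists_max_image _ Sigma.snd hR
  simp only [mem_sigma, mem_range, mem_filter, R] at h₀
  refine ⟨p - (c₀ + 1), c₀ + 1, by omega, ?_⟩
  rw [hT.entriesInCols_eq_sum, sum_range_length_eq_sum_range ν hL
    (g := fun r w => #{c ∈ range w | T r c ≤ d ∧ c < c₀ + 1}) (by simp), ← sum_add_distrib]
  refine sum_le_sum fun r hr => hT.min_add_card_filter_le hν hs h₀.2.1 h₀.2.2.1 h₀.2.2.2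
    fun c hc => hmax ⟨r, c⟩ (mem_sigma.mpr ⟨hr, hc⟩)

end IsStdTableau

theorem exists_mem_Ico_of_lt {α : Type*} [LinearOrder α] (f : ℕ → α) {x : α} {n : ℕ}
    (h0 : f 0 ≤ x) (hn : x < f n) : ∃ k < n, f k ≤ x ∧ x < f (k + 1) := by
  induction n with
  | zero => exact absurd h0 (not_le.mpr hn)
  | succ n ih =>
    by_cases h : x < f n
    · obtain ⟨k, hk, hk'⟩ := ih h
      exact ⟨k, hk.trans (Nat.lt_succ_self n), hk'⟩
    · exact ⟨n, Nat.lt_succ_self n, not_lt.mp h, hn⟩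

theorem monotone_pSum (lam : ℕ → ℕ) : Monotone (pSum lam) :=
  fun _ _ h => sum_le_sum_of_subset (range_subset_range.mpr h)

theorem pSum_succ (lam : ℕ → ℕ) (k : ℕ) : pSum lam (k + 1) = pSum lam k + lam k :=
  sum_range_succ lam k

theorem exists_pSum_lt_le (lam : ℕ → ℕ) {n v : ℕ} (hv : 0 < v) (hvn : v ≤ pSum lam n) :
    ∃ k < n, pSum lam k < v ∧ v ≤ pSum lam (k + 1) := by
  obtain ⟨k, hk, h₁, h₂⟩ := exists_mem_Ico_of_lt (pSum lam) (x := v - 1) (n := n)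
    (by simp [pSum]) (by omega)
  exact ⟨k, hk, by omega, by omega⟩

theorem LSidx_pSum_add {n : ℕ} {lam : ℕ → ℕ} {j d : ℕ} (hj : j < n) (hd : 0 < d)
    (hdj : d ≤ lam j) : LSidx n lam (pSum lam j + d) = j := by
  refine Nat.findGreatest_eq_iff.mpr ⟨hj.le, fun _ => by omega, fun k hjk _ hk => ?_⟩
  have := monotone_pSum lam (show j + 1 ≤ k from hjk)
  rw [pSum_succ] at this
  omega

theorem shift_eq_pSum {μ : ℕ → List ℕ} {lam : ℕ → ℕ} (hlam : ∀ k, lam k = (μ k).sum) (k : ℕ) :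
    shift μ k = pSum lam k :=
  sum_congr rfl fun l _ => (hlam l).symm

def sumRow (μ : ℕ → List ℕ) (j r : ℕ) : ℕ := ∑ k ∈ range j, (μ k).getD r 0

section SumRow

variable {n : ℕ} {μ : ℕ → List ℕ}

theorem sumRow_zero (μ : ℕ → List ℕ) (r : ℕ) : sumRow μ 0 r = 0 := sum_range_zero _

theorem sumRow_succ (μ : ℕ → List ℕ) (j r : ℕ) :
    sumRow μ (j + 1) r = sumRow μ j r + (μ j).getD r 0 :=
  sum_range_succ _ j

theorem sumRow_mono (μ : ℕ → List ℕ) (r : ℕ) {j j' : ℕ} (h : j ≤ j') :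
    sumRow μ j r ≤ sumRow μ j' r :=
  sum_le_sum_of_subset (range_subset_range.mpr h)

theorem antitone_sumRow (hpart : ∀ k < n, IsPartitionL (μ k)) {j : ℕ} (hj : j ≤ n) :
    Antitone (sumRow μ j) :=
  fun _ _ h => sum_le_sum fun k hk => (hpart k ((mem_range.mp hk).trans_le hj)).antitone_getD h

theorem length_le_maxLen {k : ℕ} (hk : k < n) : (μ k).length ≤ maxLen n μ :=
  le_sup (f := fun k => (μ k).length) (mem_range.mpr hk)

theorem sumShape_length (n : ℕ) (μ : ℕ → List ℕ) : (sumShape n μ).length = maxLen n μ :=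
  List.length_ofFn

theorem sumShape_getD (n : ℕ) (μ : ℕ → List ℕ) (r : ℕ) :
    (sumShape n μ).getD r 0 = sumRow μ n r := by
  rcases lt_or_ge r (maxLen n μ) with h | h
  · rw [List.getD_eq_getElem _ _ (by rwa [sumShape_length])]
    simp [sumShape, sumRow]
  · rw [List.getD_eq_default _ _ (by rwa [sumShape_length])]
    exact (sum_eq_zero fun k hk =>
      List.getD_eq_default _ _ ((length_le_maxLen (mem_range.mp hk)).trans h)).symm

theorem sum_sumRow {lam : ℕ → ℕ} (hlam : ∀ k, lam k = (μ k).sum) {j : ℕ} (hj : j ≤ n) :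
    ∑ r ∈ range (maxLen n μ), sumRow μ j r = pSum lam j := by
  unfold sumRow
  rw [sum_comm]
  exact sum_congr rfl fun k hk => by
    rw [hlam, sum_range_getD_eq_sum (length_le_maxLen ((mem_range.mp hk).trans_le hj))]

theorem sumShape_sum {lam : ℕ → ℕ} (hlam : ∀ k, lam k = (μ k).sum) :
    (sumShape n μ).sum = pSum lam n := by
  rw [← sum_range_getD_eq_sum (sumShape_length n μ).le]
  simp_rw [sumShape_getD]
  exact sum_sumRow hlam le_rfl

theorem antitone_sumShape (hpart : ∀ k < n, IsPartitionL (μ k)) :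
    Antitone ((sumShape n μ).getD · 0) := by
  simpa only [sumShape_getD] using antitone_sumRow hpart le_rfl

end SumRow

section Stacking

variable {n : ℕ} {μ : ℕ → List ℕ} {lam : ℕ → ℕ}

theorem length_flatten_stkBlocks (μ : ℕ → List ℕ) (σ : ℕ → ℕ → ℕ → ℕ) (j r : ℕ) :
    ((List.range j).map fun k =>
      (List.range ((μ k).getD r 0)).map fun c => σ k r c + shift μ k).flatten.length =
      sumRow μ j r := by
  induction j with
  | zero => simp [sumRow_zero]
  | succ j ih =>
    rw [List.range_succ, List.map_append, List.flatten_append, List.length_append, ih,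
      sumRow_succ]
    simp

theorem stkEntry_eq (σ : ℕ → ℕ → ℕ → ℕ) {k r c : ℕ} (hk : k < n)
    (h₁ : sumRow μ k r ≤ c) (h₂ : c < sumRow μ (k + 1) r) :
    stkEntry n μ σ r c = σ k r (c - sumRow μ k r) + shift μ k := by
  obtain ⟨m, rfl⟩ := Nat.exists_eq_add_of_lt hk
  have hlen := length_flatten_stkBlocks μ σ
  rw [stkEntry, stkRow, show k + m + 1 = (k + 1) + m by omega, List.range_add, List.map_append,
    List.flatten_append, List.getD_append _ _ _ _ (by rwa [hlen]), List.range_succ,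
    List.map_append, List.flatten_append, List.getD_append_right _ _ _ _ (by rwa [hlen]), hlen]
  rw [sumRow_succ] at h₂
  simp only [List.map_cons, List.map_nil, List.flatten_cons, List.flatten_nil, List.append_nil]
  rw [List.getD_eq_getElem _ _ (by simp only [List.length_map, List.length_range]; omega)]
  simp

theorem exists_block_of_lt_sumRow {r c : ℕ} (hc : c < sumRow μ n r) :
    ∃ k < n, sumRow μ k r ≤ c ∧ c < sumRow μ (k + 1) r :=
  exists_mem_Ico_of_lt (sumRow μ · r) (by simp [sumRow_zero]) hc

variable {σ : ℕ → ℕ → ℕ → ℕ}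

theorem stkEntry_eq_add_pSum (hlam : ∀ k, lam k = (μ k).sum) {k r c : ℕ} (hk : k < n)
    (h₁ : sumRow μ k r ≤ c) (h₂ : c < sumRow μ (k + 1) r) :
    stkEntry n μ σ r c = σ k r (c - sumRow μ k r) + pSum lam k := by
  rw [stkEntry_eq σ hk h₁ h₂, shift_eq_pSum hlam]

theorem lt_getD_of_mem_block {k r c : ℕ} (h₁ : sumRow μ k r ≤ c)
    (h₂ : c < sumRow μ (k + 1) r) : c - sumRow μ k r < (μ k).getD r 0 := by
  rw [sumRow_succ] at h₂
  omega

theorem stkEntry_mem_block (hlam : ∀ k, lam k = (μ k).sum)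
    (hσ : ∀ k < n, IsStdTableau (μ k) (σ k)) {k r c : ℕ} (hk : k < n)
    (h₁ : sumRow μ k r ≤ c) (h₂ : c < sumRow μ (k + 1) r) :
    pSum lam k < stkEntry n μ σ r c ∧ stkEntry n μ σ r c ≤ pSum lam (k + 1) := by
  have hc := lt_getD_of_mem_block h₁ h₂
  have := (hσ k hk).entry_mem r _ (lt_length_of_lt_getD hc) hc
  rw [stkEntry_eq_add_pSum hlam hk h₁ h₂, pSum_succ, hlam k]
  omega

theorem stkEntry_lt_of_block_lt (hlam : ∀ k, lam k = (μ k).sum)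
    (hσ : ∀ k < n, IsStdTableau (μ k) (σ k)) {k k' r r' c c' : ℕ} (hkk' : k < k')
    (hk' : k' < n) (h₁ : sumRow μ k r ≤ c) (h₂ : c < sumRow μ (k + 1) r)
    (h₁' : sumRow μ k' r' ≤ c') (h₂' : c' < sumRow μ (k' + 1) r') :
    stkEntry n μ σ r c < stkEntry n μ σ r' c' := by
  have := stkEntry_mem_block hlam hσ (hkk'.trans hk') h₁ h₂
  have := stkEntry_mem_block hlam hσ hk' h₁' h₂'
  have := monotone_pSum lam (show k + 1 ≤ k' from hkk')
  omega

theorem exists_stkEntry_eq (hlam : ∀ k, lam k = (μ k).sum)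
    (hσ : ∀ k < n, IsStdTableau (μ k) (σ k)) {a : ℕ} (ha : 1 ≤ a) (haN : a ≤ pSum lam n) :
    ∃ r c, r < maxLen n μ ∧ c < sumRow μ n r ∧ stkEntry n μ σ r c = a := by
  obtain ⟨k, hk, h₁, h₂⟩ := exists_pSum_lt_le lam ha haN
  rw [pSum_succ, hlam] at h₂
  obtain ⟨r, c, hr, hc, hσa⟩ := (hσ k hk).exists_box (a - pSum lam k) (by omega) (by omega)
  have hblock : sumRow μ k r + c < sumRow μ (k + 1) r := by rw [sumRow_succ]; omega
  refine ⟨r, sumRow μ k r + c, hr.trans_le (length_le_maxLen hk),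
    hblock.trans_le (sumRow_mono μ r hk), ?_⟩
  rw [stkEntry_eq_add_pSum hlam hk (Nat.le_add_right _ _) hblock, Nat.add_sub_cancel_left, hσa]
  omega

theorem stkEntry_inj (hlam : ∀ k, lam k = (μ k).sum)
    (hσ : ∀ k < n, IsStdTableau (μ k) (σ k)) {r c r' c' : ℕ} (hc : c < sumRow μ n r)
    (hc' : c' < sumRow μ n r') (h : stkEntry n μ σ r c = stkEntry n μ σ r' c') :
    r = r' ∧ c = c' := by
  obtain ⟨k, hk, h₁, h₂⟩ := exists_block_of_lt_sumRow hc
  obtain ⟨k', hk', h₁', h₂'⟩ := exists_block_of_lt_sumRow hc'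
  obtain rfl : k = k' := by
    by_contra hne
    rcases lt_or_gt_of_ne hne with hlt | hlt
    · exact (stkEntry_lt_of_block_lt hlam hσ hlt hk' h₁ h₂ h₁' h₂').ne h
    · exact (stkEntry_lt_of_block_lt hlam hσ hlt hk h₁' h₂' h₁ h₂).ne' h
  rw [stkEntry_eq_add_pSum hlam hk h₁ h₂, stkEntry_eq_add_pSum hlam hk h₁' h₂',
    add_left_inj] at h
  have hb := lt_getD_of_mem_block h₁ h₂
  have hb' := lt_getD_of_mem_block h₁' h₂'
  obtain ⟨rfl, _⟩ := (hσ k hk).inj _ _ _ _ (lt_length_of_lt_getD hb) hb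
    (lt_length_of_lt_getD hb') hb' h
  exact ⟨rfl, by omega⟩

theorem stkEntry_row_lt (hlam : ∀ k, lam k = (μ k).sum)
    (hσ : ∀ k < n, IsStdTableau (μ k) (σ k)) {r c c' : ℕ} (hcc' : c < c')
    (hc' : c' < sumRow μ n r) : stkEntry n μ σ r c < stkEntry n μ σ r c' := by
  obtain ⟨k, hk, h₁, h₂⟩ := exists_block_of_lt_sumRow (hcc'.trans hc')
  obtain ⟨k', hk', h₁', h₂'⟩ := exists_block_of_lt_sumRow hc'
  rcases lt_trichotomy k k' with hlt | rfl | hlt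
  · exact stkEntry_lt_of_block_lt hlam hσ hlt hk' h₁ h₂ h₁' h₂'
  · rw [stkEntry_eq_add_pSum hlam hk h₁ h₂, stkEntry_eq_add_pSum hlam hk h₁' h₂',
      add_lt_add_iff_right]
    have hb' := lt_getD_of_mem_block h₁' h₂'
    exact (hσ k hk).row_lt _ _ _ (lt_length_of_lt_getD hb') (by omega) hb'
  · have := sumRow_mono μ r (show k' + 1 ≤ k from hlt)
    omega

theorem stkEntry_col_lt (hpart : ∀ k < n, IsPartitionL (μ k))
    (hlam : ∀ k, lam k = (μ k).sum) (hσ : ∀ k < n, IsStdTableau (μ k) (σ k)) {r r' c : ℕ}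
    (hrr' : r < r') (hc : c < sumRow μ n r') : stkEntry n μ σ r c < stkEntry n μ σ r' c := by
  obtain ⟨k, hk, h₁, h₂⟩ :=
    exists_block_of_lt_sumRow (hc.trans_le (antitone_sumRow hpart le_rfl hrr'.le))
  obtain ⟨k', hk', h₁', h₂'⟩ := exists_block_of_lt_sumRow hc
  rcases lt_trichotomy k k' with hlt | rfl | hlt
  · exact stkEntry_lt_of_block_lt hlam hσ hlt hk' h₁ h₂ h₁' h₂'
  · rw [stkEntry_eq_add_pSum hlam hk h₁ h₂, stkEntry_eq_add_pSum hlam hk h₁' h₂',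
      add_lt_add_iff_right]
    have hb' := lt_getD_of_mem_block h₁' h₂'
    have := antitone_sumRow hpart hk.le hrr'.le
    have hrow := (hσ k hk).row_le (lt_length_of_lt_getD (lt_getD_of_mem_block h₁ h₂))
      (show c - sumRow μ k r ≤ c - sumRow μ k r' by omega)
      (hb'.trans_le ((hpart k hk).antitone_getD hrr'.le))
    exact hrow.trans_lt ((hσ k hk).col_lt r r' _ hrr' (lt_length_of_lt_getD hb') hb')
  · have := sumRow_mono μ r (show k' + 1 ≤ k from hlt)
    have := antitone_sumRow hpart (show k' + 1 ≤ n by omega) hrr'.le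
    omega

theorem isStdTableau_stkEntry (hpart : ∀ k < n, IsPartitionL (μ k))
    (hlam : ∀ k, lam k = (μ k).sum) (hσ : ∀ k < n, IsStdTableau (μ k) (σ k)) :
    IsStdTableau (sumShape n μ) (stkEntry n μ σ) where
  entry_mem r c _ hc := by
    rw [sumShape_getD] at hc
    obtain ⟨k, hk, h₁, h₂⟩ := exists_block_of_lt_sumRow hc
    have := stkEntry_mem_block hlam hσ hk h₁ h₂
    have := monotone_pSum lam (show k + 1 ≤ n from hk)
    rw [sumShape_sum hlam]
    omega
  exists_box a ha haN := by
    rw [sumShape_sum hlam] at haN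
    simpa only [sumShape_length, sumShape_getD] using exists_stkEntry_eq hlam hσ ha haN
  inj r c r' c' _ hc _ hc' := by
    rw [sumShape_getD] at hc hc'
    exact stkEntry_inj hlam hσ hc hc'
  row_lt r c c' _ hcc' hc' := stkEntry_row_lt hlam hσ hcc' (by rwa [sumShape_getD] at hc')
  col_lt r r' c hrr' _ hc := stkEntry_col_lt hpart hlam hσ hrr' (by rwa [sumShape_getD] at hc)

theorem stkEntry_le_pSum_add_iff (hlam : ∀ k, lam k = (μ k).sum)
    (hσ : ∀ k < n, IsStdTableau (μ k) (σ k)) {j d r c : ℕ} (hj : j < n) (hd : d ≤ lam j)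
    (hc : c < sumRow μ n r) :
    stkEntry n μ σ r c ≤ pSum lam j + d ↔ c < sumRow μ j r ∨
      sumRow μ j r ≤ c ∧ c < sumRow μ (j + 1) r ∧ σ j r (c - sumRow μ j r) ≤ d := by
  obtain ⟨k, hk, h₁, h₂⟩ := exists_block_of_lt_sumRow hc
  have := stkEntry_mem_block hlam hσ hk h₁ h₂
  rcases lt_trichotomy k j with hlt | rfl | hlt
  · have := monotone_pSum lam (show k + 1 ≤ j from hlt)
    have := sumRow_mono μ r (show k + 1 ≤ j from hlt)
    omega
  · rw [stkEntry_eq_add_pSum hlam hk h₁ h₂]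
    omega
  · have := monotone_pSum lam (show j + 1 ≤ k from hlt)
    have := sumRow_mono μ r (show j + 1 ≤ k from hlt)
    have := sumRow_succ μ j r
    have := pSum_succ lam j
    omega

theorem card_filter_stkEntry_le (hlam : ∀ k, lam k = (μ k).sum)
    (hσ : ∀ k < n, IsStdTableau (μ k) (σ k)) {j d : ℕ} (hj : j < n) (hd : d ≤ lam j)
    (r p : ℕ) :
    #{c ∈ range (sumRow μ n r) | stkEntry n μ σ r c ≤ pSum lam j + d ∧ c < p} =
      min p (sumRow μ j r) +
        #{c ∈ range ((μ j).getD r 0) | sumRow μ j r + c < p ∧ σ j r c ≤ d} := by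
  have hjn := sumRow_mono μ r (show j + 1 ≤ n from hj)
  have hj₁ := sumRow_succ μ j r
  have hsplit : {c ∈ range (sumRow μ n r) | stkEntry n μ σ r c ≤ pSum lam j + d ∧ c < p} =
      range (min p (sumRow μ j r)) ∪
        {c ∈ range ((μ j).getD r 0) | sumRow μ j r + c < p ∧ σ j r c ≤ d}.map
          (addLeftEmbedding (sumRow μ j r)) := by
    ext c
    simp only [mem_filter, mem_range, mem_union, mem_map, addLeftEmbedding_apply, lt_min_iff]
    constructor
    · rintro ⟨hc, hle, hcp⟩
      rcases (stkEntry_le_pSum_add_iff hlam hσ hj hd hc).mp hle with h | ⟨h₁, h₂, hσc⟩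
      · exact .inl ⟨hcp, h⟩
      · exact .inr ⟨c - sumRow μ j r, ⟨by omega, by omega, hσc⟩, by omega⟩
    · rintro (⟨hcp, h⟩ | ⟨c', ⟨hc', hc'p, hσc'⟩, rfl⟩)
      · have hc : c < sumRow μ n r := by omega
        exact ⟨hc, (stkEntry_le_pSum_add_iff hlam hσ hj hd hc).mpr (.inl h), hcp⟩
      · have hc : sumRow μ j r + c' < sumRow μ n r := by omega
        refine ⟨hc, (stkEntry_le_pSum_add_iff hlam hσ hj hd hc).mpr (.inr ⟨by omega, by omega, ?_⟩),
          hc'p⟩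
        rwa [Nat.add_sub_cancel_left]
  rw [hsplit, card_union_of_disjoint, card_range, card_map]
  refine disjoint_left.mpr fun c h h' => ?_
  simp only [mem_range, mem_map, addLeftEmbedding_apply] at h h'
  omega

theorem exists_split_entriesInCols_stkEntry_le (hpart : ∀ k < n, IsPartitionL (μ k))
    (hlam : ∀ k, lam k = (μ k).sum) (hσ : ∀ k < n, IsStdTableau (μ k) (σ k)) {j d : ℕ}
    (hj : j < n) (hd : d ≤ lam j) (p : ℕ) :
    ∃ a b, a + b = p ∧ entriesInCols (sumShape n μ) (stkEntry n μ σ) (pSum lam j + d) p ≤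
      ∑ r ∈ range (maxLen n μ), min a (sumRow μ j r) + entriesInCols (μ j) (σ j) d b := by
  rw [(isStdTableau_stkEntry hpart hlam hσ).entriesInCols_eq_sum, sumShape_length]
  simp_rw [sumShape_getD, card_filter_stkEntry_le hlam hσ hj hd]
  exact (hσ j hj).exists_split_card_filter_le (hpart j hj).antitone_getD
    (antitone_sumRow hpart hj.le) (length_le_maxLen hj) d p

end Stacking

section LinearAlgebra

open Submodule Module

variable {𝕜 V : Type*} [Field 𝕜] [AddCommGroup V] [Module 𝕜 V]

theorem Submodule.finrank_map_add_finrank_inf_ker {W : Type*} [AddCommGroup W] [Module 𝕜 W]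
    [FiniteDimensional 𝕜 V] (f : V →ₗ[𝕜] W) (U : Submodule 𝕜 V) :
    finrank 𝕜 (U.map f) + finrank 𝕜 ↥(U ⊓ LinearMap.ker f) = finrank 𝕜 U := by
  have h := LinearMap.finrank_range_add_finrank_ker (f.domRestrict U)
  rw [LinearMap.range_domRestrict, LinearMap.ker_domRestrict] at h
  rwa [← map_comap_subtype, ← (equivMapOfInjective _ U.injective_subtype _).finrank_eq]

theorem finrank_map_pow_eq_sum [FiniteDimensional 𝕜 V] {U : Submodule 𝕜 V} {f : V →ₗ[𝕜] V}
    {ν : List ℕ} (hdim : finrank 𝕜 U = ν.sum)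
    (htype : ∀ p : ℕ, finrank 𝕜 ↥(U ⊓ LinearMap.ker (f ^ p)) =
      ∑ r ∈ range ν.length, min p (ν.getD r 0))
    {L : ℕ} (hL : ν.length ≤ L) (b : ℕ) :
    finrank 𝕜 (U.map (f ^ b)) = ∑ r ∈ range L, (ν.getD r 0 - b) := by
  have h := finrank_map_add_finrank_inf_ker (f ^ b) U
  rw [htype, hdim, ← sum_range_getD_eq_sum hL,
    sum_range_length_eq_sum_range ν hL (g := fun _ x => min b x) fun _ => min_zero b] at h
  have : ∑ r ∈ range L, min b (ν.getD r 0) + ∑ r ∈ range L, (ν.getD r 0 - b) =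
      ∑ r ∈ range L, ν.getD r 0 := by
    rw [← sum_add_distrib]
    exact sum_congr rfl fun _ _ => by omega
  omega

def blockSum (Vsub : ℕ → Submodule 𝕜 V) (j : ℕ) : Submodule 𝕜 V := ∑ k ∈ range j, Vsub k

variable {n : ℕ} {lam : ℕ → ℕ} {Vsub : ℕ → Submodule 𝕜 V} {e e0 : V →ₗ[𝕜] V}

theorem blockSum_zero (Vsub : ℕ → Submodule 𝕜 V) : blockSum Vsub 0 = ⊥ := sum_range_zero _

theorem blockSum_succ (Vsub : ℕ → Submodule 𝕜 V) (j : ℕ) :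
    blockSum Vsub (j + 1) = blockSum Vsub j ⊔ Vsub j :=
  sum_range_succ _ j

theorem IsDecomp.disjoint_blockSum (h : IsDecomp n lam Vsub) {j : ℕ} (hj : j < n) :
    Disjoint (blockSum Vsub j) (Vsub j) :=
  ((h.indep j hj).mono_right (sum_le_sum_of_subset fun _ hk =>
    mem_erase.mpr ⟨(mem_range.mp hk).ne, mem_range.mpr ((mem_range.mp hk).trans hj)⟩)).symm

theorem IsDecomp.finrank_blockSum [FiniteDimensional 𝕜 V] (h : IsDecomp n lam Vsub) {j : ℕ}
    (hj : j ≤ n) : finrank 𝕜 (blockSum Vsub j) = pSum lam j := by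
  induction j with
  | zero => simp [blockSum_zero, pSum]
  | succ j ih =>
    have := finrank_sup_add_finrank_inf_eq (blockSum Vsub j) (Vsub j)
    rw [(h.disjoint_blockSum hj).eq_bot, finrank_bot, ih (by omega), h.dim j hj] at this
    rw [blockSum_succ, pSum_succ]
    omega

theorem LSflag_pSum_add (F : ℕ → ℕ → Submodule 𝕜 V) {j d : ℕ} (hj : j < n) (hd : 0 < d)
    (hdj : d ≤ lam j) : LSflag n lam Vsub F (pSum lam j + d) = blockSum Vsub j ⊔ F j d := by
  rw [LSflag, LSidx_pSum_add hj hd hdj, Nat.add_sub_cancel_left]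
  rfl

theorem map_le_blockSum_sup_map {j : ℕ}
    (he0 : ∀ x ∈ Vsub j, e0 x ∈ Vsub j ∧ e x - e0 x ∈ ∑ k ∈ range j, Vsub k)
    {X : Submodule 𝕜 V} (hX : X ≤ Vsub j) : X.map e ≤ blockSum Vsub j ⊔ X.map e0 := by
  rintro _ ⟨x, hx, rfl⟩
  rw [← sub_add_cancel (e x) (e0 x)]
  exact add_mem (mem_sup_left (he0 x (hX hx)).2) (mem_sup_right (mem_map_of_mem hx))

theorem map_le_of_le_block {j : ℕ}
    (he0 : ∀ x ∈ Vsub j, e0 x ∈ Vsub j ∧ e x - e0 x ∈ ∑ k ∈ range j, Vsub k)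
    {X : Submodule 𝕜 V} (hX : X ≤ Vsub j) : X.map e0 ≤ Vsub j := by
  rintro _ ⟨x, hx, rfl⟩
  exact (he0 x (hX hx)).1

theorem map_blockSum_le
    (he0 : ∀ j < n, ∀ x ∈ Vsub j, e0 x ∈ Vsub j ∧ e x - e0 x ∈ ∑ k ∈ range j, Vsub k)
    {j : ℕ} (hj : j ≤ n) : (blockSum Vsub j).map e ≤ blockSum Vsub j := by
  induction j with
  | zero => simp [blockSum_zero]
  | succ j ih =>
    rw [blockSum_succ, Submodule.map_sup]
    exact sup_le ((ih (by omega)).trans le_sup_left) ((map_le_blockSum_sup_map (he0 j hj) le_rfl).trans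
      (sup_le_sup_left (map_le_of_le_block (he0 j hj) le_rfl) _))

theorem map_pow_blockSum_sup_le
    (he0 : ∀ j < n, ∀ x ∈ Vsub j, e0 x ∈ Vsub j ∧ e x - e0 x ∈ ∑ k ∈ range j, Vsub k)
    {j : ℕ} (hj : j < n) {X : Submodule 𝕜 V} (hX : X ≤ Vsub j) (b : ℕ) :
    (blockSum Vsub j ⊔ X).map (e ^ b) ≤ blockSum Vsub j ⊔ X.map (e0 ^ b) := by
  induction b generalizing X with
  | zero => simp only [pow_zero, Module.End.one_eq_id, map_id, le_rfl]
  | succ b ih =>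
    have hstep : (blockSum Vsub j ⊔ X).map e ≤ blockSum Vsub j ⊔ X.map e0 := by
      rw [Submodule.map_sup]
      exact sup_le ((map_blockSum_le he0 hj.le).trans le_sup_left)
        (map_le_blockSum_sup_map (he0 j hj) hX)
    calc (blockSum Vsub j ⊔ X).map (e ^ (b + 1))
        = ((blockSum Vsub j ⊔ X).map e).map (e ^ b) := by
          rw [pow_succ, Module.End.mul_eq_comp, map_comp]
      _ ≤ (blockSum Vsub j ⊔ X.map e0).map (e ^ b) := map_mono hstep
      _ ≤ blockSum Vsub j ⊔ (X.map e0).map (e0 ^ b) := ih (map_le_of_le_block (he0 j hj) hX)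
      _ = blockSum Vsub j ⊔ X.map (e0 ^ (b + 1)) := by
          rw [pow_succ, Module.End.mul_eq_comp, map_comp]

theorem finrank_map_pow_blockSum_sup_le [FiniteDimensional 𝕜 V]
    (he0 : ∀ j < n, ∀ x ∈ Vsub j, e0 x ∈ Vsub j ∧ e x - e0 x ∈ ∑ k ∈ range j, Vsub k)
    {j : ℕ} (hj : j < n) {X : Submodule 𝕜 V} (hX : X ≤ Vsub j) {a b p : ℕ} (hab : a + b = p) :
    finrank 𝕜 ((blockSum Vsub j ⊔ X).map (e ^ p)) ≤
      finrank 𝕜 ((blockSum Vsub j).map (e ^ a)) + finrank 𝕜 (X.map (e0 ^ b)) := by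
  rw [← hab, pow_add, Module.End.mul_eq_comp, map_comp]
  calc _ ≤ finrank 𝕜 ((blockSum Vsub j ⊔ X.map (e0 ^ b)).map (e ^ a)) :=
        finrank_mono (map_mono (map_pow_blockSum_sup_le he0 hj hX b))
    _ ≤ _ := by
        rw [Submodule.map_sup]
        exact (finrank_add_le_finrank_add_finrank _ _).trans
          (Nat.add_le_add_left (finrank_map_le _ _) _)

end LinearAlgebra

section Spaltenstein

open Submodule Module

variable {𝕜 V : Type*} [Field 𝕜] [AddCommGroup V] [Module 𝕜 V] [FiniteDimensional 𝕜 V]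
  {n : ℕ} {μ : ℕ → List ℕ} {lam : ℕ → ℕ} {Vsub : ℕ → Submodule 𝕜 V} {e e0 : V →ₗ[𝕜] V}

theorem finrank_map_pow_blockSum_le (hpart : ∀ k < n, IsPartitionL (μ k))
    (hlam : ∀ k, lam k = (μ k).sum) (hdecomp : IsDecomp n lam Vsub)
    (he0 : ∀ j < n, ∀ x ∈ Vsub j, e0 x ∈ Vsub j ∧ e x - e0 x ∈ ∑ k ∈ range j, Vsub k)
    (he0type : ∀ k < n, ∀ p : ℕ, finrank 𝕜 ↥(Vsub k ⊓ LinearMap.ker (e0 ^ p)) =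
      ∑ j ∈ range (μ k).length, min p ((μ k).getD j 0))
    {j : ℕ} (hj : j ≤ n) (p : ℕ) :
    finrank 𝕜 ((blockSum Vsub j).map (e ^ p)) ≤ ∑ r ∈ range (maxLen n μ), (sumRow μ j r - p) := by
  induction j generalizing p with
  | zero =>
    rw [blockSum_zero, Submodule.map_bot, finrank_bot]
    exact Nat.zero_le _
  | succ j ih =>
    obtain ⟨a, b, hab, hsplit⟩ := exists_add_eq_sum_tsub_add_sum_tsub_le
      (antitone_sumRow hpart (by omega : j ≤ n)) (hpart j hj).antitone_getD (range (maxLen n μ)) p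
    have h := finrank_map_pow_blockSum_sup_le he0 hj le_rfl hab
    rw [← blockSum_succ, finrank_map_pow_eq_sum ((hdecomp.dim j hj).trans (hlam j))
      (he0type j hj) (length_le_maxLen hj) b] at h
    simp_rw [sumRow_succ]
    have := ih (by omega) a
    omega

theorem le_finrank_blockSum_sup_inf_ker (hpart : ∀ k < n, IsPartitionL (μ k))
    (hlam : ∀ k, lam k = (μ k).sum) (hdecomp : IsDecomp n lam Vsub)
    (he0 : ∀ j < n, ∀ x ∈ Vsub j, e0 x ∈ Vsub j ∧ e x - e0 x ∈ ∑ k ∈ range j, Vsub k)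
    (he0type : ∀ k < n, ∀ p : ℕ, finrank 𝕜 ↥(Vsub k ⊓ LinearMap.ker (e0 ^ p)) =
      ∑ j ∈ range (μ k).length, min p ((μ k).getD j 0))
    {j : ℕ} (hj : j < n) {X : Submodule 𝕜 V} (hX : X ≤ Vsub j) {a b p : ℕ} (hab : a + b = p) :
    ∑ r ∈ range (maxLen n μ), min a (sumRow μ j r) + finrank 𝕜 ↥(X ⊓ LinearMap.ker (e0 ^ b)) ≤
      finrank 𝕜 ↥((blockSum Vsub j ⊔ X) ⊓ LinearMap.ker (e ^ p)) := by
  have hsup := finrank_sup_add_finrank_inf_eq (blockSum Vsub j) X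
  rw [((hdecomp.disjoint_blockSum hj).mono_right hX).eq_bot, finrank_bot,
    hdecomp.finrank_blockSum hj.le, ← sum_sumRow hlam hj.le] at hsup
  have hrows : ∑ r ∈ range (maxLen n μ), min a (sumRow μ j r) +
      ∑ r ∈ range (maxLen n μ), (sumRow μ j r - a) = ∑ r ∈ range (maxLen n μ), sumRow μ j r := by
    rw [← sum_add_distrib]
    exact sum_congr rfl fun _ _ => by omega
  have := finrank_map_pow_blockSum_sup_le he0 hj hX hab
  have := finrank_map_pow_blockSum_le hpart hlam hdecomp he0 he0type hj.le a
  have := finrank_map_add_finrank_inf_ker (e ^ p) (blockSum Vsub j ⊔ X)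
  have := finrank_map_add_finrank_inf_ker (e0 ^ b) X
  omega

theorem entriesInCols_stkEntry_le_finrank_LSflag (hpart : ∀ k < n, IsPartitionL (μ k))
    (hlam : ∀ k, lam k = (μ k).sum) (hdecomp : IsDecomp n lam Vsub)
    (he0 : ∀ j < n, ∀ x ∈ Vsub j, e0 x ∈ Vsub j ∧ e x - e0 x ∈ ∑ k ∈ range j, Vsub k)
    (he0type : ∀ k < n, ∀ p : ℕ, finrank 𝕜 ↥(Vsub k ⊓ LinearMap.ker (e0 ^ p)) =
      ∑ j ∈ range (μ k).length, min p ((μ k).getD j 0))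
    {F : ℕ → ℕ → Submodule 𝕜 V} (hF : ∀ k < n, IsFlagOf (Vsub k) (lam k) (F k))
    {σ : ℕ → ℕ → ℕ → ℕ} (hσ : ∀ k < n, IsStdTableau (μ k) (σ k))
    (hΦ0 : ∀ k < n, ∀ d ≤ lam k, ∀ p : ℕ,
      finrank 𝕜 ↥(F k d ⊓ LinearMap.ker (e0 ^ p)) = entriesInCols (μ k) (σ k) d p)
    {i : ℕ} (hi : i ≤ pSum lam n) (p : ℕ) :
    entriesInCols (sumShape n μ) (stkEntry n μ σ) i p ≤
      finrank 𝕜 ↥(LSflag n lam Vsub F i ⊓ LinearMap.ker (e ^ p)) := by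
  rcases i.eq_zero_or_pos with rfl | hi₀
  · rw [entriesInCols_zero]
    exact Nat.zero_le _
  obtain ⟨j, hj, h₁, h₂⟩ := exists_pSum_lt_le lam hi₀ hi
  obtain ⟨d, rfl⟩ : ∃ d, i = pSum lam j + d := ⟨i - pSum lam j, by omega⟩
  have hdj : d ≤ lam j := by rw [pSum_succ] at h₂; omega
  obtain ⟨a, b, hab, hle⟩ := exists_split_entriesInCols_stkEntry_le hpart hlam hσ hj hdj p
  rw [← hΦ0 j hj d hdj b] at hle
  rw [LSflag_pSum_add F hj (by omega) hdj]
  exact hle.trans (le_finrank_blockSum_sup_inf_ker hpart hlam hdecomp he0 he0type hj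
    ((hF j hj).le d) hab)

end Spaltenstein

theorem spaltenstein_invariant_of_LSflag_ge_stacking_general
    {𝕜 V : Type*} [Field 𝕜] [AddCommGroup V] [Module 𝕜 V] [FiniteDimensional 𝕜 V]
    (n : ℕ) (μ : ℕ → List ℕ)
    (hpart : ∀ i < n, IsPartitionL (μ i))
    (lam : ℕ → ℕ) (hlam : ∀ k, lam k = (μ k).sum)
    (N : ℕ) (hN : N = ∑ k ∈ Finset.range n, lam k)
    (Vsub : ℕ → Submodule 𝕜 V) (hdecomp : IsDecomp n lam Vsub)
    (e e0 : V →ₗ[𝕜] V)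
    (he0 : ∀ j < n, ∀ x ∈ Vsub j, e0 x ∈ Vsub j ∧
      e x - e0 x ∈ ∑ k ∈ Finset.range j, Vsub k)
    (he0type : ∀ k < n, ∀ p : ℕ,
      Module.finrank 𝕜 ↥(Vsub k ⊓ LinearMap.ker (e0 ^ p)) =
      ∑ j ∈ Finset.range (μ k).length, min p ((μ k).getD j 0))
    (F : ℕ → ℕ → Submodule 𝕜 V) (hF : ∀ k < n, IsFlagOf (Vsub k) (lam k) (F k))
    (σ : ℕ → ℕ → ℕ → ℕ) (hσ : ∀ k < n, IsStdTableau (μ k) (σ k))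
    (hΦ0 : ∀ k < n, ∀ d ≤ lam k, ∀ p : ℕ,
      Module.finrank 𝕜 ↥(F k d ⊓ LinearMap.ker (e0 ^ p)) = entriesInCols (μ k) (σ k) d p)
    (τ : ℕ → ℕ → ℕ) (hτ : IsStdTableau (sumShape n μ) τ)
    (hΦ : ∀ i ≤ N, ∀ p : ℕ,
      Module.finrank 𝕜 ↥(LSflag n lam Vsub F i ⊓ LinearMap.ker (e ^ p)) =
      entriesInCols (sumShape n μ) τ i p) :
    (∀ r c, r < (sumShape n μ).length → c < (sumShape n μ).getD r 0 →
      τ r c = stkEntry n μ σ r c) ∨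
    TabLT (sumShape n μ) (stkEntry n μ σ) τ := by
  have hsum : (sumShape n μ).sum = pSum lam n := sumShape_sum hlam
  refine (isStdTableau_stkEntry hpart hlam hσ).eq_or_tabLT_of_entriesInCols_le hτ
    (antitone_sumShape hpart) fun i hi p => ?_
  rw [hsum] at hi
  rw [← hΦ i (hN ▸ hi) p]
  exact entriesInCols_stkEntry_le_finrank_LSflag hpart hlam hdecomp he0 he0type hF hσ hΦ0 hi p

/-- (Key step for the stacking theorem.) Suppose `e` is nilpotent of Jordan
type `μ^Σ`, the block-diagonal part `e0` restricts to each `V_k` as a nilpotent of Jordan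
type `μ k`, and `F k` are full flags of the `V_k` in the Springer fibre of `e0` with
Spaltenstein invariants `σ k ∈ Std(μ k)`. If `τ ∈ Std(μ^Σ)` is the Spaltenstein invariant
of the Lusztig–Spaltenstein flag `LS(F 0, ..., F (n-1))` with respect to `e`, then either
`τ = stk(σ 0, ..., σ (n-1))` or `stk(σ 0, ..., σ (n-1)) < τ` in the order on `Std(μ^Σ)`. -/
theorem spaltenstein_invariant_of_LSflag_ge_stacking
    {𝕜 V : Type*} [Field 𝕜] [AddCommGroup V] [Module 𝕜 V] [FiniteDimensional 𝕜 V]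
    (n : ℕ) (μ : ℕ → List ℕ)
    (hpart : ∀ i < n, IsPartitionL (μ i)) (hcomp : ∀ i < n, 0 < (μ i).sum)
    (lam : ℕ → ℕ) (hlam : ∀ k, lam k = (μ k).sum)
    (N : ℕ) (hN : N = ∑ k ∈ Finset.range n, lam k)
    (hdim : Module.finrank 𝕜 V = N)
    (Vsub : ℕ → Submodule 𝕜 V) (hdecomp : IsDecomp n lam Vsub)
    (e e0 : V →ₗ[𝕜] V)
    (he : ∀ j < n, Submodule.map e (Vsub j) ≤ ∑ k ∈ Finset.range (j + 1), Vsub k)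
    (he0 : ∀ j < n, ∀ x ∈ Vsub j, e0 x ∈ Vsub j ∧
      e x - e0 x ∈ ∑ k ∈ Finset.range j, Vsub k)
    (henil : IsNilpotent e)
    (hetype : ∀ p : ℕ, Module.finrank 𝕜 ↥(LinearMap.ker (e ^ p)) =
      ∑ j ∈ Finset.range (sumShape n μ).length, min p ((sumShape n μ).getD j 0))
    (he0type : ∀ k < n, ∀ p : ℕ,
      Module.finrank 𝕜 ↥(Vsub k ⊓ LinearMap.ker (e0 ^ p)) =
      ∑ j ∈ Finset.range (μ k).length, min p ((μ k).getD j 0))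
    (F : ℕ → ℕ → Submodule 𝕜 V) (hF : ∀ k < n, IsFlagOf (Vsub k) (lam k) (F k))
    (hspringer : ∀ k < n, ∀ d, Submodule.map e0 (F k (d + 1)) ≤ F k d)
    (σ : ℕ → ℕ → ℕ → ℕ) (hσ : ∀ k < n, IsStdTableau (μ k) (σ k))
    (hΦ0 : ∀ k < n, ∀ d ≤ lam k, ∀ p : ℕ,
      Module.finrank 𝕜 ↥(F k d ⊓ LinearMap.ker (e0 ^ p)) = entriesInCols (μ k) (σ k) d p)
    (τ : ℕ → ℕ → ℕ) (hτ : IsStdTableau (sumShape n μ) τ)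
    (hΦ : ∀ i ≤ N, ∀ p : ℕ,
      Module.finrank 𝕜 ↥(LSflag n lam Vsub F i ⊓ LinearMap.ker (e ^ p)) =
      entriesInCols (sumShape n μ) τ i p) :
    (∀ r c, r < (sumShape n μ).length → c < (sumShape n μ).getD r 0 →
      τ r c = stkEntry n μ σ r c) ∨
    TabLT (sumShape n μ) (stkEntry n μ σ) τ :=
  spaltenstein_invariant_of_LSflag_ge_stacking_general n μ hpart lam hlam N hN Vsub hdecomp e e0 he0
    he0type F hF σ hσ hΦ0 τ hτ hΦ
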